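/- arXiv:2501.02315 — 4 statements merged into one kernel-verified Lean document; each statement's English description precedes it below -/
import Mathlib

section
/- Let V be a finite-dimensional vector space over ℚ equipped with a quadratic form Q, fix v₀ ∈ V with Q(v₀) ≠ 0, and for v ∈ V let μ(v) denote the endomorphism a ↦ ι(v)·a·ι(v₀) of the even Clifford algebra C⁺(V). Suppose g ∈ C⁺(V) is such that left multiplication by g commutes with μ(v) for every v ∈ V, i.e. g·(ι(v)·a·ι(v₀)) = ι(v)·(g·a)·ι(v₀) for all v ∈ V and all a ∈ C⁺(V). Then g is a central element of C⁺(V): g·β = β·g for every β ∈ C⁺(V). -/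
/-! Taking `a = 1` in the hypothesis gives `(g * ι v) * ι v₀ = (ι v * g) * ι v₀`; since
`ι v₀ ^ 2 = Q v₀` is a nonzero rational, `ι v₀` is a unit and can be cancelled, so `g` commutes
with every generator `ι v`, hence with all of `C(V)`, and in particular with `C⁺(V)`. -/

open CliffordAlgebra

namespace CliffordAlgebra

variable {R M : Type*} [CommRing R] [AddCommGroup M] [Module R M] {Q : QuadraticForm R M}

theorem commute_of_forall_commute_ι {g : CliffordAlgebra Q} (h : ∀ m, Commute g (ι Q m))
    (x : CliffordAlgebra Q) : Commute g x := by
  induction x using CliffordAlgebra.induction with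
  | algebraMap r => exact Algebra.commute_algebraMap_right r g
  | ι m => exact h m
  | mul a b ha hb => exact ha.mul_right hb
  | add a b ha hb => exact ha.add_right hb

end CliffordAlgebra

theorem stmt2_general (V : Type) [AddCommGroup V] [Module ℚ V]
    (Q : QuadraticForm ℚ V) (v₀ : V) (hv₀ : Q v₀ ≠ 0)
    (g : CliffordAlgebra Q)
    (hcomm : ∀ (v : V), ∀ a ∈ CliffordAlgebra.evenOdd Q 0,
      g * (CliffordAlgebra.ι Q v * a * CliffordAlgebra.ι Q v₀) =
        CliffordAlgebra.ι Q v * (g * a) * CliffordAlgebra.ι Q v₀) :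
    ∀ β ∈ CliffordAlgebra.evenOdd Q 0, g * β = β * g := by
  have hι₀ : IsUnit (ι Q v₀) := isUnit_ι_of_isUnit Q (Ne.isUnit hv₀)
  have hgι : ∀ v, Commute g (ι Q v) := fun v => hι₀.mul_left_injective <| by
    have h := hcomm v 1 (Submodule.one_le.mp (one_le_evenOdd_zero Q))
    simpa only [mul_one, mul_assoc] using h
  exact fun β _ => commute_of_forall_commute_ι hgι β

/-- If `g ∈ C⁺(V)` is such that left multiplication by `g` commutes with
`μ v : a ↦ ι v * a * ι v₀` on `C⁺(V)` for every `v : V`, then `g` is central in `C⁺(V)`: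
`g * β = β * g` for every `β ∈ C⁺(V)`. -/
theorem stmt2 (V : Type) [AddCommGroup V] [Module ℚ V] [FiniteDimensional ℚ V]
    (Q : QuadraticForm ℚ V) (v₀ : V) (hv₀ : Q v₀ ≠ 0)
    (g : CliffordAlgebra Q) (hg : g ∈ CliffordAlgebra.evenOdd Q 0)
    (hcomm : ∀ (v : V), ∀ a ∈ CliffordAlgebra.evenOdd Q 0,
      g * (CliffordAlgebra.ι Q v * a * CliffordAlgebra.ι Q v₀) =
        CliffordAlgebra.ι Q v * (g * a) * CliffordAlgebra.ι Q v₀) :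
    ∀ β ∈ CliffordAlgebra.evenOdd Q 0, g * β = β * g :=
  stmt2_general V Q v₀ hv₀ g hcomm
end

section
/- Let V be a finite-dimensional vector space over ℚ of odd dimension, equipped with a quadratic form Q whose associated polar bilinear form is nondegenerate. Then the center of the even Clifford algebra C⁺(V) consists exactly of the scalars: every g ∈ C⁺(V) satisfying g·β = β·g for all β ∈ C⁺(V) is of the form g = c·1 for some c ∈ ℚ. -/
open CliffordAlgebra

open scoped DirectSum
variable {V : Type} [AddCommGroup V] [Module ℚ V] (Q : QuadraticForm ℚ V)

lemma contract_mul (d : Module.Dual ℚ V) (x y : CliffordAlgebra Q) :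
    contractLeft d (x * y) =
      contractLeft d x * y + involute x * contractLeft d y := by
  induction x using CliffordAlgebra.induction generalizing y with
  | algebraMap r =>
      rw [contractLeft_algebraMap_mul, contractLeft_algebraMap, zero_mul, zero_add,
        AlgHom.commutes]
  | ι v =>
      rw [contractLeft_ι_mul, contractLeft_ι, involute_ι, Algebra.smul_def, neg_mul, sub_eq_add_neg]
  | mul x₁ x₂ h1 h2 =>
      rw [mul_assoc, h1 (x₂ * y), h2 y, h1 x₂, map_mul]
      simp only [mul_add, add_mul, mul_assoc, add_assoc]
  | add x₁ x₂ h1 h2 =>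
      simp only [add_mul, map_add, h1 y, h2 y]
      abel

lemma sc (v : V) (x : CliffordAlgebra Q) :
    ι Q v * x = involute x * ι Q v + contractLeft (Q.polarBilin v) x := by
  induction x using CliffordAlgebra.induction with
  | algebraMap r =>
      rw [AlgHom.commutes, contractLeft_algebraMap, add_zero, Algebra.commutes]
  | ι w =>
      rw [involute_ι, contractLeft_ι, neg_mul, QuadraticMap.polarBilin_apply_apply,
        ← ι_mul_ι_add_swap, neg_add_cancel_comm_assoc]
  | mul x₁ x₂ h1 h2 =>
      rw [← mul_assoc, h1, add_mul, mul_assoc, h2, map_mul, contract_mul, mul_add,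
        ← mul_assoc]
      abel
  | add x₁ x₂ h1 h2 =>
      simp only [mul_add, add_mul, map_add, h1, h2]
      abel

lemma central_of_commute_ι (z : CliffordAlgebra Q) (h : ∀ v, z * ι Q v = ι Q v * z)
    (x : CliffordAlgebra Q) : z * x = x * z := by
  induction x using CliffordAlgebra.induction with
  | algebraMap r => rw [Algebra.commutes, ← Algebra.commutes r z]
  | ι w => exact h w
  | mul x₁ x₂ h1 h2 => rw [← mul_assoc, h1, mul_assoc, h2, mul_assoc]
  | add x₁ x₂ h1 h2 => rw [mul_add, add_mul, h1, h2]

lemma list_move {I : Type} [DecidableEq I] (e : I → CliffordAlgebra Q)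
    (hanti : ∀ i j, i ≠ j → e i * e j = -(e j * e i)) (j : I) :
    ∀ l : List I, e j * (l.map e).prod =
      ((-1 : ℚ) ^ (l.filter (· ≠ j)).length) • ((l.map e).prod * e j)
  | [] => by simp
  | i :: l => by
      rw [List.map_cons, List.prod_cons]
      by_cases hij : i = j
      · subst hij
        have h2 : ((i :: l).filter (· ≠ i)) = l.filter (· ≠ i) := by
          simp [List.filter_cons]
        conv_lhs => rw [list_move e hanti i l]
        rw [mul_smul_comm, ← mul_assoc, h2]
      · rw [← mul_assoc, hanti j i (fun h => hij h.symm), neg_mul, mul_assoc,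
          list_move e hanti j l]
        have : ((i :: l).filter (· ≠ j)).length = (l.filter (· ≠ j)).length + 1 := by
          simp [List.filter_cons, hij]
        rw [this, pow_succ, mul_smul_comm, ← mul_assoc]
        simp [smul_smul, mul_comm]

lemma list_sq {I : Type} [DecidableEq I] (e : I → CliffordAlgebra Q)
    (hanti : ∀ i j, i ≠ j → e i * e j = -(e j * e i))
    (hsq : ∀ i, ∃ c : ℚ, c ≠ 0 ∧ e i * e i = algebraMap ℚ _ c) :
    ∀ l : List I, ∃ c : ℚ, c ≠ 0 ∧ (l.map e).prod * (l.map e).prod = algebraMap ℚ _ c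
  | [] => ⟨1, one_ne_zero, by simp⟩
  | i :: l => by
      obtain ⟨c, hc, hcc⟩ := list_sq e hanti hsq l
      obtain ⟨ci, hci, hcii⟩ := hsq i
      refine ⟨(-1 : ℚ) ^ (l.filter (· ≠ i)).length * ci * c, by positivity, ?_⟩
      rw [List.map_cons, List.prod_cons]
      calc e i * (l.map e).prod * (e i * (l.map e).prod)
          = (e i * (l.map e).prod) * e i * (l.map e).prod := (mul_assoc (e i * (l.map e).prod) (e i) ((l.map e).prod)).symm
        _ = ((-1 : ℚ) ^ (l.filter (· ≠ i)).length • ((l.map e).prod * e i)) * e i * (l.map e).prod := by rw [list_move Q e hanti i l]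
        _ = (-1 : ℚ) ^ (l.filter (· ≠ i)).length • ((l.map e).prod * (e i * e i) * (l.map e).prod) := by
              simp only [smul_mul_assoc, mul_assoc]
        _ = algebraMap ℚ _ ((-1 : ℚ) ^ (l.filter (· ≠ i)).length * ci * c) := by
              rw [hcii, ← Algebra.commutes ci, mul_assoc, hcc, ← map_mul,
                Algebra.smul_def, ← map_mul]
              exact congrArg _ (by ring)

set_option maxHeartbeats 1000000 in
set_option synthInstance.maxHeartbeats 400000 in
lemma ext_scalar [FiniteDimensional ℚ V] (x : ExteriorAlgebra ℚ V)
    (h : ∀ d : Module.Dual ℚ V, contractLeft (Q := (0 : QuadraticForm ℚ V)) d x = 0) :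
    ∃ c : ℚ, x = algebraMap ℚ _ c := by
  classical
  have hpb : ∀ v : V, (0 : QuadraticForm ℚ V).polarBilin v = 0 := by
    intro v; ext w
    simp [QuadraticMap.polarBilin_apply_apply, QuadraticMap.polar]
  have hanti : ∀ (v : V) (y : ExteriorAlgebra ℚ V),
      ExteriorAlgebra.ι ℚ v * y = involute y * ExteriorAlgebra.ι ℚ v := by
    intro v y
    have := sc (0 : QuadraticForm ℚ V) v y
    rwa [hpb, map_zero, LinearMap.zero_apply, add_zero] at this
  let b := Module.finBasis ℚ V
  let N : ExteriorAlgebra ℚ V →ₗ[ℚ] ExteriorAlgebra ℚ V :=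
    ∑ i, (LinearMap.mulLeft ℚ (ExteriorAlgebra.ι ℚ (b i))).comp
      (contractLeft (b.coord i))
  have Napp : ∀ y, N y = ∑ i, ExteriorAlgebra.ι ℚ (b i) * contractLeft (b.coord i) y := by
    intro y; simp [N, LinearMap.sum_apply]
  have Nmul : ∀ y z, N (y * z) = N y * z + y * N z := by
    intro y z
    have key : ∀ i, ExteriorAlgebra.ι ℚ (b i) * contractLeft (b.coord i) (y * z)
        = (ExteriorAlgebra.ι ℚ (b i) * contractLeft (b.coord i) y) * z
          + y * (ExteriorAlgebra.ι ℚ (b i) * contractLeft (b.coord i) z) := by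
      intro i
      rw [contract_mul, mul_add, ← mul_assoc, ← mul_assoc, hanti (b i) (involute y),
        involute_involute, mul_assoc y]
    simp only [Napp, key, Finset.sum_add_distrib, ← Finset.sum_mul, ← Finset.mul_sum]
  have Nalg : ∀ r : ℚ, N (algebraMap ℚ _ r) = 0 := by
    intro r; simp [Napp, contractLeft_algebraMap]
  have Nι : ∀ v : V, N (ExteriorAlgebra.ι ℚ v) = ExteriorAlgebra.ι ℚ v := by
    intro v
    simp only [Napp, contractLeft_ι]
    simp_rw [← Algebra.commutes, ← Algebra.smul_def, Module.Basis.coord_apply, ← map_smul,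
      ← map_sum, Module.Basis.sum_repr]
  have Npow : ∀ (k : ℕ) (y : ExteriorAlgebra ℚ V),
      y ∈ (LinearMap.range (ExteriorAlgebra.ι ℚ : V →ₗ[ℚ] ExteriorAlgebra ℚ V)) ^ k →
      N y = (k : ℚ) • y := by
    intro k y hy
    induction hy using Submodule.pow_induction_on_left' with
    | algebraMap r => rw [Nalg]; simp
    | add a c i ha hc iha ihc => rw [map_add, iha, ihc, smul_add]
    | mem_mul m hm i z hz ihz =>
        obtain ⟨v, rfl⟩ := hm
        rw [Nmul, Nι, ihz, mul_smul_comm]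
        push_cast
        rw [add_smul, one_smul, add_comm]
  set 𝒜 : ℕ → Submodule ℚ (ExteriorAlgebra ℚ V) := fun i => ⋀[ℚ]^i V with h𝒜
  haveI : GradedAlgebra 𝒜 := ExteriorAlgebra.gradedAlgebra ℚ V
  have hN0 : N x = 0 := by simp [Napp, h]
  set s := (DirectSum.decompose 𝒜 x).support with hs
  have e2 : N x = ∑ j ∈ s, (j : ℚ) • ((DirectSum.decompose 𝒜 x j : ExteriorAlgebra ℚ V)) := by
    conv_lhs => rw [← DirectSum.sum_support_decompose 𝒜 x]
    rw [map_sum]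
    exact Finset.sum_congr rfl fun j _ => Npow j _ (SetLike.coe_mem _)
  have hk0 : ∀ k : ℕ, k ≠ 0 → (DirectSum.decompose 𝒜 x k : ExteriorAlgebra ℚ V) = 0 := by
    intro k hkne
    have e1 : DirectSum.decompose 𝒜 (N x) = DirectSum.decompose 𝒜 0 := congrArg _ hN0
    rw [DirectSum.decompose_zero, e2, DirectSum.decompose_sum] at e1
    have t1 := congrArg (fun f : (⨁ i, 𝒜 i) => f k) e1
    simp only at t1
    rw [DFinsupp.finset_sum_apply] at t1
    have t2 := congrArg (fun z : 𝒜 k => (z : ExteriorAlgebra ℚ V)) t1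
    simp only [AddSubmonoidClass.coe_finset_sum, DirectSum.zero_apply,
      ZeroMemClass.coe_zero] at t2
    rw [Finset.sum_eq_single k
      (fun j _ hj => DirectSum.decompose_of_mem_ne 𝒜
        (Submodule.smul_mem _ _ (SetLike.coe_mem _)) hj)
      (fun hks => by
        rw [DFinsupp.notMem_support_iff.mp hks]
        simp)] at t2
    rw [DirectSum.decompose_of_mem_same 𝒜
      (Submodule.smul_mem _ _ (SetLike.coe_mem _))] at t2
    rcases smul_eq_zero.mp t2 with hbad | hgood
    · exact absurd hbad (Nat.cast_ne_zero.mpr hkne)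
    · exact hgood
  have hx0 : x ∈ (LinearMap.range (ExteriorAlgebra.ι ℚ : V →ₗ[ℚ] ExteriorAlgebra ℚ V)) ^ 0 := by
    have hxs : x = ∑ j ∈ s, ((DirectSum.decompose 𝒜 x j : ExteriorAlgebra ℚ V)) :=
      (DirectSum.sum_support_decompose 𝒜 x).symm
    rw [Finset.sum_eq_single 0
      (fun j _ hj => hk0 j hj)
      (fun hks => by rw [DFinsupp.notMem_support_iff.mp hks]; simp)] at hxs
    rw [hxs]
    exact SetLike.coe_mem _
  rw [pow_zero] at hx0
  obtain ⟨c, hc⟩ := Submodule.mem_one.mp hx0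
  exact ⟨c, hc.symm⟩

lemma prod_map_mem : ∀ l : List V, (l.map (ι Q)).prod ∈ (LinearMap.range (ι Q)) ^ l.length
  | [] => by
      simp only [List.map_nil, List.prod_nil, List.length_nil, pow_zero]
      exact Submodule.mem_one.mpr ⟨1, map_one _⟩
  | v :: l => by
      rw [List.map_cons, List.prod_cons, List.length_cons, pow_succ']
      exact Submodule.mul_mem_mul (LinearMap.mem_range_self _ v) (prod_map_mem l)

/-- Let `V` be a finite-dimensional `ℚ`-vector space of odd dimension with a
quadratic form `Q` whose polar bilinear form is nondegenerate.  Then the center of the even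
Clifford algebra `C⁺(V)` consists exactly of the scalars: every `g ∈ C⁺(V)` commuting with all
of `C⁺(V)` is of the form `c • 1` for some `c : ℚ`. -/
theorem stmt3 (V : Type) [AddCommGroup V] [Module ℚ V] [FiniteDimensional ℚ V]
    (Q : QuadraticForm ℚ V) (hodd : Odd (Module.finrank ℚ V))
    (hnd : ∀ v : V, (∀ w : V, QuadraticMap.polar (⇑Q) v w = 0) → v = 0)
    (g : CliffordAlgebra Q) (hg : g ∈ CliffordAlgebra.evenOdd Q 0)
    (hcentral : ∀ β ∈ CliffordAlgebra.evenOdd Q 0, g * β = β * g) :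
    ∃ c : ℚ, g = algebraMap ℚ (CliffordAlgebra Q) c := by
  classical
  haveI : Invertible (2 : ℚ) := invertibleOfNonzero two_ne_zero
  set n := Module.finrank ℚ V with hn
  -- orthogonal basis
  have hsymm : (Q.polarBilin).IsSymm := by
    refine ⟨fun x y => ?_⟩
    simp [QuadraticMap.polarBilin_apply_apply, QuadraticMap.polar_comm]
  obtain ⟨b, hb⟩ := LinearMap.BilinForm.exists_orthogonal_basis hsymm
  have horth : ∀ i j, i ≠ j → QuadraticMap.polar (⇑Q) (b i) (b j) = 0 := by
    intro i j hij
    exact QuadraticMap.IsOrtho.polar_eq_zero (QuadraticMap.isOrtho_polarBilin.mp (hb hij))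
  set e : Fin n → CliffordAlgebra Q := fun i => ι Q (b i) with he
  have hanti : ∀ i j, i ≠ j → e i * e j = -(e j * e i) := by
    intro i j hij
    have := ι_mul_ι_add_swap (Q := Q) (b i) (b j)
    rw [horth i j hij, map_zero] at this
    exact eq_neg_of_add_eq_zero_left this
  have hQb : ∀ i, Q (b i) ≠ 0 := by
    intro i hQ
    refine b.ne_zero i (hnd _ ?_)
    intro w
    have hz : Q.polarBilin (b i) = 0 := by
      apply b.ext
      intro j
      rcases eq_or_ne i j with rfl | hij
      · simp [QuadraticMap.polarBilin_apply_apply, QuadraticMap.polar_self, hQ]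
      · rw [LinearMap.zero_apply, QuadraticMap.polarBilin_apply_apply]
        exact QuadraticMap.IsOrtho.polar_eq_zero (QuadraticMap.isOrtho_polarBilin.mp (hb hij))
    simpa [QuadraticMap.polarBilin_apply_apply] using LinearMap.congr_fun hz w
  have hsq : ∀ i, ∃ c : ℚ, c ≠ 0 ∧ e i * e i = algebraMap ℚ _ c :=
    fun i => ⟨Q (b i), hQb i, ι_sq_scalar Q (b i)⟩
  set ω : CliffordAlgebra Q := (((List.finRange n)).map e).prod with hω
  -- ω commutes with each e j
  have hcomm_e : ∀ j, e j * ω = ω * e j := by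
    intro j
    rw [hω, list_move Q e hanti j]
    have hlen : (((List.finRange n)).filter (· ≠ j)).length = n - 1 := by
      have hfe : (fun x : Fin n => decide (x ≠ j)) = fun x => x != j := by
        funext x; simp [bne, Bool.beq_eq_decide_eq]
      rw [hfe, ← List.Nodup.erase_eq_filter (List.nodup_finRange n) j]
      have := List.length_erase_add_one (a := j) (l := List.finRange n)
        (List.mem_finRange j)
      rw [List.length_finRange] at this
      omega
    rw [hlen]
    have heven : Even (n - 1) := Nat.Odd.sub_odd hodd odd_one
    rw [heven.neg_one_pow, one_smul]
  have hcomm_ι : ∀ v : V, ι Q v * ω = ω * ι Q v := by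
    intro v
    have hv : ι Q v = ∑ j, b.repr v j • e j := by
      conv_lhs => rw [← b.sum_repr v]
      rw [map_sum]
      simp [he]
    rw [hv, Finset.sum_mul, Finset.mul_sum]
    exact Finset.sum_congr rfl fun j _ => by
      rw [smul_mul_assoc, mul_smul_comm, hcomm_e j]
  have hcen : ∀ x, ω * x = x * ω :=
    central_of_commute_ι Q ω (fun v => (hcomm_ι v).symm)
  obtain ⟨cω, hcω, hωsq⟩ := list_sq Q e hanti hsq (List.finRange n)
  rw [← hω] at hωsq
  -- ω is odd
  have hω1 : ω ∈ evenOdd Q 1 := by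
    have hmem : ω ∈ (LinearMap.range (ι Q)) ^ n := by
      have : ω = ((((List.finRange n)).map b).map (ι Q)).prod := by
        rw [hω, List.map_map]; rfl
      rw [this]
      have := prod_map_mem Q (((List.finRange n)).map b)
      simpa using this
    have hn2 : ((n : ℕ) : ZMod 2) = 1 := by
      obtain ⟨m, hm⟩ := hodd
      rw [hm]
      push_cast
      rw [show (2 : ZMod 2) = 0 from rfl]
      ring
    exact le_iSup (fun j : {m : ℕ // ((m : ℕ) : ZMod 2) = 1} =>
      (LinearMap.range (ι Q)) ^ (j : ℕ)) ⟨n, hn2⟩ hmem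
  -- g commutes with odd elements
  have hodd_comm : ∀ x ∈ evenOdd Q 1, g * x = x * g := by
    intro x hx
    have hβ : ω * x ∈ evenOdd Q 0 := by
      have h11 : (1 + 1 : ZMod 2) = 0 := by decide
      have := evenOdd_mul_le Q 1 1 (Submodule.mul_mem_mul hω1 hx)
      rwa [h11] at this
    have hc := hcentral (ω * x) hβ
    have h2 : ω * (g * x) = ω * (x * g) :=
      calc ω * (g * x) = (ω * g) * x := (mul_assoc _ _ _).symm
        _ = (g * ω) * x := by rw [hcen g]
        _ = g * (ω * x) := mul_assoc _ _ _
        _ = (ω * x) * g := hc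
        _ = ω * (x * g) := mul_assoc _ _ _
    have h3 := congrArg (fun y => ω * y) h2
    simp only [← mul_assoc, hωsq] at h3
    rw [← Algebra.smul_def, ← Algebra.smul_def] at h3
    have h4 : cω • (g * x) = cω • (x * g) := by
      simpa [smul_mul_assoc, mul_assoc] using h3
    exact smul_right_injective _ hcω h4
  have hcomm_all : ∀ v : V, ι Q v * g = g * ι Q v := by
    intro v
    have hv : ι Q v ∈ evenOdd Q 1 := ι_mem_evenOdd_one Q v
    exact (hodd_comm _ hv).symm
  -- contractions of g vanish
  have hinv : involute g = g := involute_eq_of_mem_even hg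
  have hcontrP : ∀ v : V, contractLeft (Q.polarBilin v) g = 0 := by
    intro v
    have := sc Q v g
    rw [hinv, ← hcomm_all v] at this
    exact (add_eq_left.mp this.symm)
  have hsurj : Function.Surjective (Q.polarBilin : V →ₗ[ℚ] Module.Dual ℚ V) := by
    have hinj : Function.Injective (Q.polarBilin : V →ₗ[ℚ] Module.Dual ℚ V) := by
      rw [← LinearMap.ker_eq_bot, LinearMap.ker_eq_bot']
      intro v hv
      apply hnd
      intro w
      simpa [QuadraticMap.polarBilin_apply_apply] using LinearMap.congr_fun hv w
    exact (LinearMap.injective_iff_surjective_of_finrank_eq_finrank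
      (Subspace.dual_finrank_eq).symm).mp hinj
  have hcontr : ∀ d : Module.Dual ℚ V, contractLeft d g = 0 := by
    intro d
    obtain ⟨v, rfl⟩ := hsurj d
    exact hcontrP v
  -- transport to exterior algebra
  set g' : ExteriorAlgebra ℚ V := equivExterior Q g with hg'
  have hg'contr : ∀ d : Module.Dual ℚ V,
      contractLeft (Q := (0 : QuadraticForm ℚ V)) d g' = 0 := by
    intro d
    rw [hg']
    show contractLeft d (changeForm changeForm.associated_neg_proof g) = 0
    rw [← changeForm_contractLeft, hcontr d, map_zero]
  obtain ⟨c, hc⟩ := ext_scalar g' hg'contr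
  refine ⟨c, (equivExterior Q).injective ?_⟩
  rw [← hg', hc]
  exact (changeForm_algebraMap changeForm.associated_neg_proof c).symm
end

section
/- Let V be a finite-dimensional vector space over ℚ of odd dimension, equipped with a quadratic form Q whose associated polar bilinear form is nondegenerate, and fix v₀ ∈ V with Q(v₀) ≠ 0. Suppose g ∈ C⁺(V) is such that left multiplication by g on the even Clifford algebra C⁺(V) commutes with μ(v) for every v ∈ V, i.e. g·(ι(v)·a·ι(v₀)) = ι(v)·(g·a)·ι(v₀) for all v ∈ V and all a ∈ C⁺(V). Then g is a scalar: g = c·1 for some c ∈ ℚ. -/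
set_option maxHeartbeats 2000000
open scoped DirectSum

open CliffordAlgebra


theorem graded_term_eq_zero {R E : Type*} [CommRing R] [AddCommGroup E] [Module R E]
    (𝒜 : ℕ → Submodule R E) [DirectSum.Decomposition 𝒜]
    (s : Finset ℕ) (f : ℕ → E) (hf : ∀ n, f n ∈ 𝒜 n) (h : ∑ n ∈ s, f n = 0)
    (j : ℕ) (hj : j ∈ s) : f j = 0 := by
  classical
  have h1 : ∑ n ∈ s, DirectSum.lof R ℕ (fun i => 𝒜 i) n ⟨f n, hf n⟩ = (0 : ⨁ i, 𝒜 i) := by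
    rw [← DirectSum.decompose_zero (ℳ := 𝒜), ← h, DirectSum.decompose_sum]
    exact Finset.sum_congr rfl fun n _ =>
      ((DirectSum.decompose_of_mem 𝒜 (hf n)).trans (DirectSum.lof_eq_of R _ _ _ _).symm).symm
  have h2 := congrArg (DirectSum.component R ℕ (fun i => 𝒜 i) j) h1
  rw [map_sum, map_zero, Finset.sum_eq_single j
    (fun n _ hne => by rw [DirectSum.component.of, dif_neg hne])
    (fun hns => absurd hj hns), DirectSum.component.of, dif_pos rfl] at h2
  exact Subtype.ext_iff.mp h2

theorem exterior_scalar_of_contract {V : Type} [AddCommGroup V] [Module ℚ V]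
    [FiniteDimensional ℚ V] (x : ExteriorAlgebra ℚ V)
    (h : ∀ d : Module.Dual ℚ V,
      contractLeft (Q := (0 : QuadraticForm ℚ V)) d x = 0) :
    ∃ c : ℚ, x = algebraMap ℚ _ c := by
  classical
  set b := Module.finBasis ℚ V with hb
  set N : ExteriorAlgebra ℚ V →ₗ[ℚ] ExteriorAlgebra ℚ V :=
    ∑ i, LinearMap.mulLeft ℚ (ExteriorAlgebra.ι ℚ (b i)) ∘ₗ
      contractLeft (Q := (0 : QuadraticForm ℚ V)) (b.coord i) with hNdef
  have hNapply : ∀ y, N y = ∑ i, ExteriorAlgebra.ι ℚ (b i) *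
      contractLeft (Q := (0 : QuadraticForm ℚ V)) (b.coord i) y := by
    intro y
    simp [hNdef, LinearMap.sum_apply]
  -- key product rule
  have key : ∀ (v : V) (y : ExteriorAlgebra ℚ V),
      N (ExteriorAlgebra.ι ℚ v * y) =
        ExteriorAlgebra.ι ℚ v * y + ExteriorAlgebra.ι ℚ v * N y := by
    intro v y
    have h1 : ∀ i, ExteriorAlgebra.ι ℚ (b i) *
        contractLeft (Q := (0 : QuadraticForm ℚ V)) (b.coord i)
          (ExteriorAlgebra.ι ℚ v * y) =
        b.coord i v • (ExteriorAlgebra.ι ℚ (b i) * y) +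
          ExteriorAlgebra.ι ℚ v * (ExteriorAlgebra.ι ℚ (b i) *
            contractLeft (Q := (0 : QuadraticForm ℚ V)) (b.coord i) y) := by
      intro i
      rw [contractLeft_ι_mul, mul_sub, mul_smul_comm, ← mul_assoc,
        eq_neg_of_add_eq_zero_left (ExteriorAlgebra.ι_add_mul_swap (b i) v),
        neg_mul, mul_assoc, sub_neg_eq_add]
    rw [hNapply, hNapply]
    simp_rw [h1]
    rw [Finset.sum_add_distrib, ← Finset.mul_sum]
    congr 1
    simp_rw [← smul_mul_assoc]
    rw [← Finset.sum_mul]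
    congr 1
    simp_rw [← map_smul, ← map_sum, Module.Basis.coord_apply, Module.Basis.sum_repr]
  -- N is the number operator
  have hN : ∀ (n : ℕ) (y : ExteriorAlgebra ℚ V),
      y ∈ (LinearMap.range (ExteriorAlgebra.ι ℚ (M := V))) ^ n → N y = (n : ℚ) • y := by
    intro n y hy
    induction hy using Submodule.pow_induction_on_left' with
    | algebraMap r => simp [hNapply]
    | add x y i hx hy ihx ihy => rw [map_add, ihx, ihy, smul_add]
    | mem_mul m hm i z hz ih =>
        obtain ⟨v, rfl⟩ := hm
        rw [key, ih, mul_smul_comm, Nat.succ_eq_add_one, Nat.cast_add, Nat.cast_one, add_smul,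
          one_smul, add_comm]
  have hNx : N x = 0 := by
    rw [hNapply]
    simp [h]
  have hmem : ∀ n, (n : ℚ) • ((DirectSum.decompose (fun n => ⋀[ℚ]^n V) x n :
      ⋀[ℚ]^n V) : ExteriorAlgebra ℚ V) ∈ ⋀[ℚ]^n V :=
    fun n => Submodule.smul_mem _ _ (SetLike.coe_mem _)
  have hsum : ∑ n ∈ (DirectSum.decompose (fun n => ⋀[ℚ]^n V) x).support,
      (n : ℚ) • ((DirectSum.decompose (fun n => ⋀[ℚ]^n V) x n : ⋀[ℚ]^n V) :
        ExteriorAlgebra ℚ V) = 0 := by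
    rw [← hNx]
    conv_rhs => rw [← DirectSum.sum_support_decompose (fun n => ⋀[ℚ]^n V) x]
    rw [map_sum]
    exact Finset.sum_congr rfl fun n _ => (hN n _ (SetLike.coe_mem _)).symm
  have hzero : ∀ j : ℕ, j ≠ 0 →
      ((DirectSum.decompose (fun n => ⋀[ℚ]^n V) x j : ⋀[ℚ]^j V) : ExteriorAlgebra ℚ V) = 0 := by
    intro j hj
    by_cases hjs : j ∈ (DirectSum.decompose (fun n => ⋀[ℚ]^n V) x).support
    · have := graded_term_eq_zero (R := ℚ) (E := ExteriorAlgebra ℚ V)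
        (fun n => ⋀[ℚ]^n V)
        ((DirectSum.decompose (fun n => ⋀[ℚ]^n V) x).support)
        (fun n => (n : ℚ) • ((DirectSum.decompose (fun n => ⋀[ℚ]^n V) x n : ⋀[ℚ]^n V) :
          ExteriorAlgebra ℚ V)) hmem hsum j hjs
      have hj' : (j : ℚ) ≠ 0 := Nat.cast_ne_zero.mpr hj
      exact (smul_eq_zero.mp this).resolve_left hj'
    · simpa using DFinsupp.notMem_support_iff.mp hjs
  have hx0 : x ∈ ⋀[ℚ]^0 V := by
    have hmem0 : (∑ n ∈ (DirectSum.decompose (fun n => ⋀[ℚ]^n V) x).support,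
        ((DirectSum.decompose (fun n => ⋀[ℚ]^n V) x n : ⋀[ℚ]^n V) : ExteriorAlgebra ℚ V))
        ∈ ⋀[ℚ]^0 V := by
      refine Submodule.sum_mem _ fun n hn => ?_
      rcases eq_or_ne n 0 with rfl | hne
      · exact SetLike.coe_mem _
      · rw [hzero n hne]; exact Submodule.zero_mem _
    rwa [DirectSum.sum_support_decompose (fun n => ⋀[ℚ]^n V) x] at hmem0
  rw [show ⋀[ℚ]^0 V = (1 : Submodule ℚ (ExteriorAlgebra ℚ V)) from pow_zero _] at hx0
  obtain ⟨c, hc⟩ := Submodule.mem_one.mp hx0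
  exact ⟨c, hc.symm⟩


theorem commutator_eq_contract {V : Type} [AddCommGroup V] [Module ℚ V]
    (Q : QuadraticForm ℚ V) (v : V) (x : CliffordAlgebra Q) :
    ι Q v * x - involute x * ι Q v =
      contractLeft (Q := Q) (QuadraticMap.polarBilin Q v) x := by
  induction x using CliffordAlgebra.left_induction with
  | algebraMap r =>
      rw [involute.commutes, contractLeft_algebraMap, Algebra.commutes, sub_self]
  | add x y hx hy =>
      rw [map_add, map_add, mul_add, add_mul, ← hx, ← hy]; abel
  | ι_mul m x hx =>
      rw [map_mul, involute_ι, contractLeft_ι_mul, ← hx, ← mul_assoc, ι_mul_ι_comm,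
        QuadraticMap.polarBilin_apply_apply, sub_mul, Algebra.smul_def, neg_mul, neg_mul,
        mul_assoc, mul_assoc, mul_sub]
      abel

/-- Let `V` be a finite-dimensional `ℚ`-vector space of odd dimension with a
quadratic form `Q` whose polar bilinear form is nondegenerate, and fix `v₀ : V` with `Q v₀ ≠ 0`.
If `g ∈ C⁺(V)` is such that left multiplication by `g` on `C⁺(V)` commutes with
`μ v : a ↦ ι v * a * ι v₀` for every `v : V`, then `g` is a scalar:
`g = c • 1` for some `c : ℚ`. -/
theorem stmt4 (V : Type) [AddCommGroup V] [Module ℚ V] [FiniteDimensional ℚ V]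
    (Q : QuadraticForm ℚ V) (hodd : Odd (Module.finrank ℚ V))
    (hnd : ∀ v : V, (∀ w : V, QuadraticMap.polar (⇑Q) v w = 0) → v = 0)
    (v₀ : V) (hv₀ : Q v₀ ≠ 0)
    (g : CliffordAlgebra Q) (hg : g ∈ CliffordAlgebra.evenOdd Q 0)
    (hcomm : ∀ (v : V), ∀ a ∈ CliffordAlgebra.evenOdd Q 0,
      g * (CliffordAlgebra.ι Q v * a * CliffordAlgebra.ι Q v₀) =
        CliffordAlgebra.ι Q v * (g * a) * CliffordAlgebra.ι Q v₀) :
    ∃ c : ℚ, g = algebraMap ℚ (CliffordAlgebra Q) c := by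
  have h1 : (1 : CliffordAlgebra Q) ∈ evenOdd Q 0 :=
    Submodule.one_le.mp (one_le_evenOdd_zero Q)
  -- g commutes with all ι v
  have hg1 : ∀ v : V, g * ι Q v = ι Q v * g := by
    intro v
    have h2 := hcomm v 1 h1
    rw [mul_one, mul_one] at h2
    have h3 := congrArg (· * ι Q v₀) h2
    simp only [mul_assoc, ι_sq_scalar] at h3
    rw [Algebra.algebraMap_eq_smul_one] at h3
    simp only [mul_smul_comm, mul_one] at h3
    exact smul_right_injective (CliffordAlgebra Q) hv₀ h3
  have hinv : involute g = g := involute_eq_of_mem_even hg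
  have hc : ∀ v : V, contractLeft (Q := Q) (QuadraticMap.polarBilin Q v) g = 0 := by
    intro v
    rw [← commutator_eq_contract, hinv, ← hg1 v, sub_self]
  -- the polar form is a surjection onto the dual
  have hsurj : Function.Surjective (QuadraticMap.polarBilin Q) := by
    have hinj : Function.Injective (QuadraticMap.polarBilin Q) := by
      rw [← LinearMap.ker_eq_bot, LinearMap.ker_eq_bot']
      intro v hv
      exact hnd v fun w => by
        rw [← QuadraticMap.polarBilin_apply_apply, hv, LinearMap.zero_apply]
    exact (LinearMap.injective_iff_surjective_of_finrank_eq_finrank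
      Subspace.dual_finrank_eq.symm).mp hinj
  have hcall : ∀ d : Module.Dual ℚ V, contractLeft (Q := Q) d g = 0 := by
    intro d
    obtain ⟨v, rfl⟩ := hsurj d
    exact hc v
  letI : Invertible (2 : ℚ) := invertibleOfNonzero two_ne_zero
  have hext : ∀ d : Module.Dual ℚ V,
      contractLeft (Q := (0 : QuadraticForm ℚ V)) d (equivExterior Q g) = 0 := by
    intro d
    have : equivExterior Q g = changeForm changeForm.associated_neg_proof g := rfl
    rw [this, ← changeForm_contractLeft, hcall d, map_zero]
  obtain ⟨c, hc2⟩ := exterior_scalar_of_contract (equivExterior Q g) hext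
  refine ⟨c, (equivExterior Q).injective ?_⟩
  rw [hc2]
  exact (changeForm_algebraMap changeForm.associated_neg_proof c).symm
end

section
/- Let L be a free ℤ-module of finite rank equipped with a symmetric ℤ-valued bilinear form b. Let M ⊆ L be a submodule such that the quotient L/M is torsion-free, and suppose e, c ∈ L satisfy b(m, c) = 0 for every m ∈ M and b(e, c) = −1. Then the submodule M + ℤ·e of L is saturated, i.e. the quotient L/(M + ℤ·e) is torsion-free: if x ∈ L and n·x ∈ M + ℤ·e for some nonzero integer n, then x ∈ M + ℤ·e. -/
/-- Let `L` be a free `ℤ`-module of finite rank with a symmetric `ℤ`-valued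
bilinear form `b`.  Let `M ⊆ L` be a submodule with torsion-free quotient `L/M` (equivalently,
`M` is saturated: `n • x ∈ M` with `n ≠ 0` implies `x ∈ M`), and suppose `e c : L` satisfy
`b m c = 0` for all `m ∈ M` and `b e c = -1`.  Then the submodule `M + ℤ • e` of `L` is
saturated, i.e. `L / (M + ℤ • e)` is torsion-free: if `n • x ∈ M + ℤ • e` for some nonzero
integer `n`, then `x ∈ M + ℤ • e`. -/
theorem stmt7 (L : Type) [AddCommGroup L] [Module ℤ L]
    [Module.Free ℤ L] [Module.Finite ℤ L]
    (b : L →ₗ[ℤ] L →ₗ[ℤ] ℤ) (hsymm : ∀ x y : L, b x y = b y x)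
    (M : Submodule ℤ L)
    (hM : ∀ (x : L) (n : ℤ), n ≠ 0 → n • x ∈ M → x ∈ M)
    (e c : L) (hc : ∀ m ∈ M, b m c = 0) (hec : b e c = -1) :
    ∀ (x : L) (n : ℤ), n ≠ 0 → n • x ∈ M ⊔ Submodule.span ℤ {e} →
      x ∈ M ⊔ Submodule.span ℤ {e} := by
  intro x n hn hx
  obtain ⟨m, hm, y, hy, hsum⟩ := Submodule.mem_sup.mp hx
  obtain ⟨k, rfl⟩ := Submodule.mem_span_singleton.mp hy
  -- normalize all ℤ-smuls (zsmul) to the `Module ℤ L` smul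
  simp only [← Int.cast_smul_eq_zsmul ℤ, Int.cast_id] at hsum hM
  have hpair : n * b x c = -k := by
    have h1 := congrArg (fun z => b z c) hsum
    simp only [map_add, map_smul, LinearMap.add_apply, LinearMap.smul_apply,
      smul_eq_mul, hc m hm, hec] at h1
    linarith
  have key : n • (x + b x c • e) = m := by
    simp only [← Int.cast_smul_eq_zsmul ℤ, Int.cast_id]
    rw [smul_add, @smul_smul _ _ _ (Module.toDistribMulAction.toMulAction), hpair, ← hsum, neg_smul, add_neg_cancel_right]
  have key' : n • (x + b x c • e) ∈ M := key ▸ hm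
  simp only [← Int.cast_smul_eq_zsmul ℤ, Int.cast_id] at key'
  have hxM := hM _ n hn key'
  have hspan := Submodule.smul_mem (Submodule.span ℤ {e}) (-(b x c))
    (Submodule.mem_span_singleton_self e)
  refine Submodule.mem_sup.mpr ⟨_, hxM, _, hspan, ?_⟩
  rw [neg_smul, add_neg_cancel_right]
end
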